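/- arXiv:0801.3951 — 3 statements merged into one kernel-verified Lean document; each statement's English description precedes it below -/
import Mathlib

section
/- Let q ≥ 3 be odd and h = (q−3)/2. Then the Möbius transformation T · (S·T)^h maps 0 to 1; equivalently, the point 1 has the finite regular λ-fraction [1; 1^h]. -/
open Matrix Real

/-- The Möbius action of a real 2×2 matrix on ℝ. -/
noncomputable def moeb (A : Matrix (Fin 2) (Fin 2) ℝ) (x : ℝ) : ℝ :=
  (A 0 0 * x + A 0 1) / (A 1 0 * x + A 1 1)

/-!
The entries of `T (S T)ⁿ` are values at `λ` of the rescaled Chebyshev polynomials `Sₖ`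
(`Sₖ₊₂ = X Sₖ₊₁ - Sₖ`), so `T (S T)ʰ · 0 = Sₕ₊₁(λ) / Sₕ(λ)`. At `λ = 2 cos θ` one has
`Sₖ(λ) sin θ = sin ((k + 1) θ)`, and for `θ = π / q` with `q = 2h + 3` the angles `(h + 2) θ` and
`(h + 1) θ` add up to `π`, so numerator and denominator agree (and are positive).
-/

open Polynomial

theorem T_mul_ST_pow_eq_chebyshevS {R : Type*} [CommRing R] (lam : R) (n : ℕ) :
    !![1, lam; 0, 1] * (!![0, -1; 1, 0] * !![1, lam; 0, 1]) ^ n =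
      !![(Chebyshev.S R n).eval lam, (Chebyshev.S R (n + 1)).eval lam;
        (Chebyshev.S R (n - 1)).eval lam, (Chebyshev.S R n).eval lam] := by
  induction n with
  | zero => simp
  | succ n ih =>
    have hST : (!![0, -1; 1, 0] * !![1, lam; 0, 1] : Matrix (Fin 2) (Fin 2) R) =
        !![0, -1; 1, lam] := by
      simp
    rw [pow_succ, ← mul_assoc, ih, hST, Matrix.mul_fin_two]
    push_cast
    rw [Chebyshev.S_add_one R (n + 1)]
    simp only [add_sub_cancel_right]
    rw [Chebyshev.S_add_one R n]
    ext i j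
    fin_cases i <;> fin_cases j <;> simp <;> ring

theorem moeb_zero (A : Matrix (Fin 2) (Fin 2) ℝ) : moeb A 0 = A 0 1 / A 1 1 := by
  simp [moeb]

theorem sin_mul_pi_div_pos {x m : ℝ} (hx : 0 < x) (hxm : x < m) : 0 < sin (x * π / m) := by
  have hm : 0 < m := hx.trans hxm
  refine sin_pos_of_pos_of_lt_pi (by positivity) ?_
  rw [div_lt_iff₀ hm, mul_comm]
  exact mul_lt_mul_of_pos_left hxm pi_pos

theorem chebyshevS_eval_two_mul_cos_pi_div_mul_sin (m : ℕ) (k : ℤ) :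
    (Chebyshev.S ℝ k).eval (2 * cos (π / m)) * sin (π / m) = sin ((k + 1) * π / m) := by
  rw [Chebyshev.S_two_mul_real_cos, mul_div_assoc]

theorem chebyshevS_eval_two_mul_cos_pi_div_reflect {m : ℕ} (hm : 2 ≤ m) (k : ℤ) :
    (Chebyshev.S ℝ (m - 2 - k)).eval (2 * cos (π / m)) =
      (Chebyshev.S ℝ k).eval (2 * cos (π / m)) := by
  have hsin : sin (π / m) ≠ 0 := by
    simpa using (sin_mul_pi_div_pos one_pos (by exact_mod_cast hm : (1 : ℝ) < m)).ne'
  refine mul_right_cancel₀ hsin ?_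
  rw [chebyshevS_eval_two_mul_cos_pi_div_mul_sin, chebyshevS_eval_two_mul_cos_pi_div_mul_sin,
    ← sin_pi_sub]
  have hm0 : (m : ℝ) ≠ 0 := by positivity
  congr 1
  field_simp
  push_cast
  ring

theorem chebyshevS_eval_two_mul_cos_pi_div_pos {m k : ℕ} (hk : k + 1 < m) :
    0 < (Chebyshev.S ℝ k).eval (2 * cos (π / m)) := by
  have hsin : 0 < sin (π / m) := by
    simpa using sin_mul_pi_div_pos one_pos (by exact_mod_cast (by omega : 1 < m) : (1 : ℝ) < m)
  refine pos_of_mul_pos_left ?_ hsin.le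
  rw [chebyshevS_eval_two_mul_cos_pi_div_mul_sin]
  exact_mod_cast sin_mul_pi_div_pos (by positivity) (by exact_mod_cast hk : (k + 1 : ℝ) < m)

/-- Let q ≥ 3 be odd and h = (q−3)/2. Then the Möbius transformation
T · (S·T)^h maps 0 to 1; equivalently, 1 has the finite regular λ-fraction [1; 1^h]. -/
theorem one_expansion_odd (q : ℕ) (hq : 3 ≤ q) (hqo : Odd q)
    (lam : ℝ) (hlam : lam = 2 * Real.cos (Real.pi / q))
    (S T : Matrix (Fin 2) (Fin 2) ℝ)
    (hS : S = !![0, -1; 1, 0]) (hT : T = !![1, lam; 0, 1])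
    (h : ℕ) (hh : h = (q - 3) / 2) :
    moeb (T * (S * T) ^ h) 0 = 1 := by
  have hq' : q = 2 * h + 3 := by obtain ⟨k, rfl⟩ := hqo; omega
  have hreflect : (Chebyshev.S ℝ (h + 1)).eval lam = (Chebyshev.S ℝ h).eval lam := by
    rw [hlam, ← chebyshevS_eval_two_mul_cos_pi_div_reflect (m := q) (by omega) h]
    congr 2
    push_cast [hq']
    ring
  have hpos : 0 < (Chebyshev.S ℝ h).eval lam :=
    hlam ▸ chebyshevS_eval_two_mul_cos_pi_div_pos (by omega)
  rw [hS, hT, T_mul_ST_pow_eq_chebyshevS, moeb_zero]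
  simpa [hreflect] using div_self hpos.ne'
end

section
/- Let q ≥ 3 be odd, h = (q−3)/2, and let R be the unique positive root of x² + (2−λ)x − 1 = 0. Then λ/2 < R < 1 and the Möbius transformation (T·S)^{h+1} maps R to −R. -/
open Matrix Real

theorem moeb_of (a b c d x : ℝ) : moeb !![a, b; c, d] x = (a * x + b) / (c * x + d) := rfl

theorem moeb_smul {c : ℝ} (hc : c ≠ 0) (A : Matrix (Fin 2) (Fin 2) ℝ) (x : ℝ) :
    moeb (c • A) x = moeb A x := by
  simp only [moeb, Matrix.smul_apply, smul_eq_mul, mul_assoc, ← mul_add]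
  exact mul_div_mul_left _ _ hc

theorem T_mul_S (lam : ℝ) :
    !![1, lam; 0, 1] * !![0, -1; 1, 0] = (!![lam, -1; 1, 0] : Matrix (Fin 2) (Fin 2) ℝ) := by
  simp

noncomputable def posRoot (lam : ℝ) : ℝ := ((lam - 2) + √((2 - lam) ^ 2 + 4)) / 2

section posRoot

variable {lam : ℝ}

theorem posRoot_isRoot : posRoot lam ^ 2 + (2 - lam) * posRoot lam - 1 = 0 := by
  unfold posRoot; linear_combination (1 / 4 : ℝ) * sq_sqrt (by positivity : 0 ≤ (2 - lam) ^ 2 + 4)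

theorem half_lt_posRoot (hlam : lam ≠ 2) : lam / 2 < posRoot lam := by
  have : 2 < √((2 - lam) ^ 2 + 4) := by
    rw [lt_sqrt zero_le_two]
    nlinarith [sq_pos_of_ne_zero (sub_ne_zero.2 hlam.symm)]
  unfold posRoot; linarith

theorem posRoot_lt_one (hlam : lam < 2) : posRoot lam < 1 := by
  have : √((2 - lam) ^ 2 + 4) < 4 - lam := by
    rw [sqrt_lt' (by linarith)]; nlinarith
  unfold posRoot; linarith

theorem posRoot_sub_one_div_eq_neg (hlam : lam < 2) :
    (posRoot lam - 1) / (posRoot lam + 1 - lam) = -posRoot lam := by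
  have := half_lt_posRoot hlam.ne
  rw [div_eq_iff (by linarith)]
  linear_combination posRoot_isRoot

end posRoot

theorem sin_add_two_mul_eq (k θ : ℝ) :
    sin ((k + 2) * θ) = 2 * cos θ * sin ((k + 1) * θ) - sin (k * θ) := by
  simp only [add_mul, one_mul, sin_add, sin_two_mul, cos_two_mul]; ring

theorem sin_smul_pow (θ : ℝ) (n : ℕ) :
    sin θ • (!![2 * cos θ, -1; 1, 0] : Matrix (Fin 2) (Fin 2) ℝ) ^ (n + 1) =
      !![sin ((n + 2) * θ), -sin ((n + 1) * θ); sin ((n + 1) * θ), -sin (n * θ)] := by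
  induction n with
  | zero =>
    simp only [zero_add, pow_one, smul_of, smul_cons, smul_empty, Nat.cast_zero, zero_mul,
      sin_zero, one_mul, sin_two_mul]
    ring_nf
  | succ n ih =>
    rw [pow_succ, ← smul_mul_assoc, ih, mul_fin_two]
    push_cast
    rw [sin_add_two_mul_eq ((n : ℝ) + 1), show (n : ℝ) + 1 + 1 = n + 2 by ring,
      sin_add_two_mul_eq (n : ℝ)]
    ring_nf

section odd

variable {h : ℕ} {θ : ℝ} (hθ : (2 * h + 3) * θ = π)
include hθ

theorem pos_of_odd_mul_eq_pi : 0 < θ := by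
  nlinarith [pi_pos, (h.cast_nonneg : (0 : ℝ) ≤ h)]

theorem sin_succ_mul_pos_of_odd_mul_eq_pi : 0 < sin ((h + 1) * θ) := by
  have := pos_of_odd_mul_eq_pi hθ
  exact sin_pos_of_pos_of_lt_pi (by positivity) (by nlinarith)

theorem sin_ne_zero_of_odd_mul_eq_pi : sin θ ≠ 0 := by
  have := pos_of_odd_mul_eq_pi hθ
  exact (sin_pos_of_pos_of_lt_pi this (by nlinarith [(h.cast_nonneg : (0 : ℝ) ≤ h)])).ne'

theorem cos_lt_one_of_odd_mul_eq_pi : cos θ < 1 := by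
  have := pos_of_odd_mul_eq_pi hθ
  simpa using cos_lt_cos_of_nonneg_of_le_pi le_rfl
    (by nlinarith [(h.cast_nonneg : (0 : ℝ) ≤ h)]) this

theorem sin_add_two_mul_of_odd_mul_eq_pi : sin ((h + 2) * θ) = sin ((h + 1) * θ) := by
  rw [← sin_pi_sub, ← hθ]; ring_nf

theorem moeb_pow_of_odd_mul_eq_pi (x : ℝ) :
    moeb ((!![2 * cos θ, -1; 1, 0] : Matrix (Fin 2) (Fin 2) ℝ) ^ (h + 1)) x =
      (x - 1) / (x + 1 - 2 * cos θ) := by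
  have hrec := sin_add_two_mul_eq h θ
  rw [sin_add_two_mul_of_odd_mul_eq_pi hθ] at hrec
  rw [← moeb_smul (sin_ne_zero_of_odd_mul_eq_pi hθ), sin_smul_pow, moeb_of,
    sin_add_two_mul_of_odd_mul_eq_pi hθ]
  calc _ = sin ((h + 1) * θ) * (x - 1) / (sin ((h + 1) * θ) * (x + 1 - 2 * cos θ)) := by
        congr 1
        · ring
        · linear_combination -hrec
    _ = _ := mul_div_mul_left _ _ (sin_succ_mul_pos_of_odd_mul_eq_pi hθ).ne'

end odd

/-- Let q ≥ 3 be odd, h = (q−3)/2, and let R be the unique positive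
root of x² + (2−λ)x − 1 = 0. Then λ/2 < R < 1 and the Möbius transformation
(T·S)^{h+1} maps R to −R. -/
theorem R_properties_odd (q : ℕ) (hq : 3 ≤ q) (hqo : Odd q)
    (lam : ℝ) (hlam : lam = 2 * Real.cos (Real.pi / q))
    (R : ℝ) (hR : R = ((lam - 2) + Real.sqrt ((2 - lam) ^ 2 + 4)) / 2)
    (S T : Matrix (Fin 2) (Fin 2) ℝ)
    (hS : S = !![0, -1; 1, 0]) (hT : T = !![1, lam; 0, 1])
    (h : ℕ) (hh : h = (q - 3) / 2) :
    lam / 2 < R ∧ R < 1 ∧ moeb ((T * S) ^ (h + 1)) R = -R := by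
  have hq' : (q : ℝ) = 2 * h + 3 := by
    obtain ⟨m, rfl⟩ := hqo
    norm_cast; omega
  have hθ : (2 * h + 3) * (π / q) = π := by
    rw [hq']; field_simp
  have hlam2 : lam < 2 := by linarith [cos_lt_one_of_odd_mul_eq_pi hθ]
  rw [← posRoot] at hR
  subst hR hS hT
  refine ⟨half_lt_posRoot hlam2.ne, posRoot_lt_one hlam2, ?_⟩
  rw [T_mul_S, hlam, moeb_pow_of_odd_mul_eq_pi hθ, ← hlam]
  exact posRoot_sub_one_div_eq_neg hlam2
end

section
/- Let q ≥ 3 be odd, λ = 2cos(π/q), and let R be the unique positive root of x² + (2−λ)x − 1 = 0. Then 2λ > R + 1, and consequently (1 − λ/2)·(5λ/2 − R) > sin²(π/q). -/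
open Real

/-! With `s = √((2 - λ)² + 4)` we have `R = (λ - 2 + s) / 2`, so `2λ > R + 1` says `s < 3λ`;
for `λ > 0` this is `2λ² + λ - 2 > 0`, which holds as soon as `λ ≥ 1`, i.e. `π/q ≤ π/3`.
Since `sin²(π/q) = 1 - λ²/4 = (1 - λ/2)(1 + λ/2)` and `1 - λ/2 > 0`, the second inequality is
the first one multiplied by `1 - λ/2`. -/

lemma one_le_two_mul_cos_pi_div {x : ℝ} (hx : 3 ≤ x) : 1 ≤ 2 * cos (π / x) := by
  have hle : π / x ≤ π / 3 := div_le_div_of_nonneg_left pi_pos.le (by norm_num) hx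
  have hpos : 0 < π / x := div_pos pi_pos (by linarith)
  have := cos_le_cos_of_nonneg_of_le_pi hpos.le (by linarith [pi_pos]) hle
  rw [cos_pi_div_three] at this
  linarith

lemma two_mul_cos_pi_div_lt_two {x : ℝ} (hx : 1 ≤ x) : 2 * cos (π / x) < 2 := by
  have hpos : 0 < π / x := div_pos pi_pos (by linarith)
  have hle : π / x ≤ π := div_le_self pi_pos.le hx
  have := cos_lt_cos_of_nonneg_of_le_pi le_rfl hle hpos
  rw [cos_zero] at this
  linarith

lemma add_one_lt_two_mul_of_one_le {lam : ℝ} (hlam : 1 ≤ lam) :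
    ((lam - 2) + √((2 - lam) ^ 2 + 4)) / 2 + 1 < 2 * lam := by
  have hsq : √((2 - lam) ^ 2 + 4) < 3 * lam :=
    (sqrt_lt' (by linarith)).2 (by nlinarith)
  linarith

lemma one_sub_sq_div_four_lt_of_add_one_lt {lam R : ℝ} (hlam : lam < 2) (h : R + 1 < 2 * lam) :
    1 - lam ^ 2 / 4 < (1 - lam / 2) * (5 * lam / 2 - R) := by
  have key : (1 - lam / 2) * (5 * lam / 2 - R) - (1 - lam ^ 2 / 4)
      = (1 - lam / 2) * (2 * lam - (R + 1)) := by ring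
  have := mul_pos (sub_pos.2 (by linarith : lam / 2 < 1)) (sub_pos.2 h)
  linarith

theorem two_lambda_gt_general (q : ℕ) (hq : 3 ≤ q)
    (lam : ℝ) (hlam : lam = 2 * Real.cos (Real.pi / q))
    (R : ℝ) (hR : R = ((lam - 2) + Real.sqrt ((2 - lam) ^ 2 + 4)) / 2) :
    2 * lam > R + 1 ∧
      (1 - lam / 2) * (5 * lam / 2 - R) > Real.sin (Real.pi / q) ^ 2 := by
  have hq3 : (3 : ℝ) ≤ q := by exact_mod_cast hq
  have hlam_ge : 1 ≤ lam := hlam ▸ one_le_two_mul_cos_pi_div hq3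
  have hlam_lt : lam < 2 := hlam ▸ two_mul_cos_pi_div_lt_two (by linarith)
  have hgt : R + 1 < 2 * lam := hR ▸ add_one_lt_two_mul_of_one_le hlam_ge
  have hsin : sin (π / q) ^ 2 = 1 - lam ^ 2 / 4 := by
    rw [sin_sq, hlam]
    ring
  exact ⟨hgt, hsin ▸ one_sub_sq_div_four_lt_of_add_one_lt hlam_lt hgt⟩

/-- Let q ≥ 3 be odd, λ = 2cos(π/q), and R the unique positive root of
x² + (2−λ)x − 1 = 0. Then 2λ > R + 1, and consequently
(1 − λ/2)(5λ/2 − R) > sin²(π/q). -/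
theorem two_lambda_gt (q : ℕ) (hq : 3 ≤ q) (hqo : Odd q)
    (lam : ℝ) (hlam : lam = 2 * Real.cos (Real.pi / q))
    (R : ℝ) (hR : R = ((lam - 2) + Real.sqrt ((2 - lam) ^ 2 + 4)) / 2) :
    2 * lam > R + 1 ∧
      (1 - lam / 2) * (5 * lam / 2 - R) > Real.sin (Real.pi / q) ^ 2 :=
  two_lambda_gt_general q hq lam hlam R hR
end
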